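/- The join X * Y of two finite simplicial complexes X and Y is strongly collapsible if and only if X is strongly collapsible or Y is strongly collapsible. -/

import Mathlib

/-!
The facets of `X * Y` are exactly the joins `σ ⊔ η` of a facet of `X` with a facet of `Y`.
Hence a vertex dominated in `X` stays dominated in `X * Y`, and deleting it commutes with
the join: strong collapses of a factor lift to the join, and collapsing `X` to a point
`v` turns `X * Y` into the cone `v * Y`, which is strongly collapsible. Conversely, a
vertex of `X * Y` dominated by a vertex of its own factor is dominated inside that
factor, so one recurses on a smaller join; and if `inl a` is dominated by `inr b`, then
`b` lies in every facet of `Y` (pair the facets of `Y` with one facet through `a`), so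
`Y` is a cone and hence strongly collapsible.
-/

open Finset

attribute [local instance] Classical.propDecidable

noncomputable section

universe u v

/-- A finite abstract simplicial complex: a finite collection of nonempty finite sets
closed under taking nonempty subsets. -/
def IsComplex {V : Type u} (X : Finset (Finset V)) : Prop :=
  (∀ s ∈ X, s.Nonempty) ∧ ∀ s ∈ X, ∀ t : Finset V, t ⊆ s → t.Nonempty → t ∈ X

/-- `s` is a maximal simplex (facet) of `X`. -/
def IsFacet {V : Type u} (X : Finset (Finset V)) (s : Finset V) : Prop :=
  s ∈ X ∧ ∀ t ∈ X, s ⊆ t → t = s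

/-- An elementary collapse: `σ` is a free face of `X` whose unique maximal coface is `τ`,
and `Y` results from removing all simplices containing `σ`. -/
def ElemCollapse {V : Type u} (X Y : Finset (Finset V)) : Prop :=
  ∃ σ τ : Finset V, σ ∈ X ∧ IsFacet X τ ∧ σ ⊂ τ ∧
    (∀ t ∈ X, σ ⊆ t → t ⊆ τ) ∧ Y = X.filter (fun s => ¬ σ ⊆ s)

/-- `X` simplicially collapses onto `Y`. -/
def Collapses {V : Type u} (X Y : Finset (Finset V)) : Prop :=
  Relation.ReflTransGen ElemCollapse X Y

/-- `X` is collapsible: it collapses to a single vertex. -/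
def Collapsible {V : Type u} (X : Finset (Finset V)) : Prop :=
  ∃ v : V, Collapses X {{v}}

/-- The vertex `v` is dominated by the vertex `w ≠ v`: every facet containing `v`
contains `w`. -/
def Dominated {V : Type u} (X : Finset (Finset V)) (v w : V) : Prop :=
  w ≠ v ∧ ∀ s : Finset V, IsFacet X s → v ∈ s → w ∈ s

/-- An elementary strong collapse: deletion of a dominated vertex. -/
def ElemStrongCollapse {V : Type u} (X Y : Finset (Finset V)) : Prop :=
  ∃ v w : V, {v} ∈ X ∧ Dominated X v w ∧ Y = X.filter (fun s => v ∉ s)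

/-- `X` strongly collapses onto `Y`. -/
def StrongCollapses {V : Type u} (X Y : Finset (Finset V)) : Prop :=
  Relation.ReflTransGen ElemStrongCollapse X Y

/-- `X` is strongly collapsible: it strongly collapses to a single vertex. -/
def StrongCollapsible {V : Type u} (X : Finset (Finset V)) : Prop :=
  ∃ v : V, StrongCollapses X {{v}}

/-- The set of vertices of a complex. -/
def vertexSet {V : Type u} (X : Finset (Finset V)) : Finset V := X.sup id

/-- The link of a simplex `σ` in `X`. -/
def linkC {V : Type u} (X : Finset (Finset V)) (σ : Finset V) : Finset (Finset V) :=
  X.filter (fun η => Disjoint η σ ∧ η ∪ σ ∈ X)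

/-- The face-deletion of `σ` in `X`. -/
def faceDeletion {V : Type u} (X : Finset (Finset V)) (σ : Finset V) : Finset (Finset V) :=
  X.filter (fun η => ¬ σ ⊆ η)

/-- The simplicial join of two complexes (on disjoint vertex sets, via `Sum`). -/
def joinC {A : Type u} {B : Type v} (X : Finset (Finset A)) (Y : Finset (Finset B)) :
    Finset (Finset (A ⊕ B)) :=
  (((insert (∅ : Finset A) X) ×ˢ (insert (∅ : Finset B) Y)).image
      (fun p => p.1.image Sum.inl ∪ p.2.image Sum.inr)).filter (·.Nonempty)

/-- The flag (clique) complex on the admissible vertices (those satisfying `P`) of a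
finite type, with respect to a (reflexive, symmetric) compatibility relation `R`:
simplices are the nonempty finite sets of admissible vertices that are pairwise
compatible. -/
def cliqueComplex {A : Type u} [Fintype A] (P : A → Prop) (R : A → A → Prop) :
    Finset (Finset A) :=
  Finset.univ.filter (fun s : Finset A =>
    s.Nonempty ∧ (∀ a ∈ s, P a) ∧ ∀ a ∈ s, ∀ b ∈ s, R a b)

/-- A complex is a cone if some vertex lies in every maximal simplex. -/
def IsCone {A : Type u} (X : Finset (Finset A)) : Prop :=
  ∃ v : A, {v} ∈ X ∧ ∀ s, IsFacet X s → v ∈ s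

/-- Simplicial isomorphism (onto): `Y` is the image of `X` under an injection of
vertices. -/
def Isom {A : Type u} {B : Type v} (X : Finset (Finset A)) (Y : Finset (Finset B)) : Prop :=
  ∃ f : A → B, Function.Injective f ∧ Y = X.image (fun s => s.image f)

section Complex

variable {V : Type u} {X X' : Finset (Finset V)}

theorem exists_isFacet_superset {s : Finset V} (hs : s ∈ X) : ∃ t, IsFacet X t ∧ s ⊆ t := by
  obtain ⟨t, hst, ht⟩ := X.exists_le_maximal hs
  exact ⟨t, ⟨ht.prop, fun u hu htu => le_antisymm (ht.2 hu htu) htu⟩, hst⟩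

theorem exists_isFacet (hX : X.Nonempty) : ∃ t, IsFacet X t :=
  let ⟨_, hs⟩ := hX
  (exists_isFacet_superset hs).imp fun _ ht => ht.1

theorem exists_isFacet_superset_of_eq_empty_or_mem (hX : X.Nonempty) {s : Finset V}
    (hs : s = ∅ ∨ s ∈ X) : ∃ t, IsFacet X t ∧ s ⊆ t := by
  rcases hs with rfl | hs
  · exact (exists_isFacet hX).imp fun _ ht => ⟨ht, empty_subset _⟩
  · exact exists_isFacet_superset hs

theorem IsComplex.singleton_mem (hX : IsComplex X) {s : Finset V} (hs : s ∈ X) {a : V}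
    (ha : a ∈ s) : {a} ∈ X :=
  hX.2 s hs {a} (singleton_subset_iff.2 ha) (singleton_nonempty a)

theorem IsComplex.filter_notMem (hX : IsComplex X) (v : V) :
    IsComplex (X.filter (fun s => v ∉ s)) := by
  refine ⟨fun s hs => hX.1 s (mem_filter.1 hs).1, fun s hs t hts ht => ?_⟩
  rw [mem_filter] at hs ⊢
  exact ⟨hX.2 s hs.1 t hts ht, fun hv => hs.2 (hts hv)⟩

theorem isComplex_singleton_singleton (v : V) : IsComplex {{v}} := by
  refine ⟨fun s hs => by simp [mem_singleton.1 hs], fun s hs t hts ht => ?_⟩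
  rw [mem_singleton] at hs ⊢
  exact ht.subset_singleton_iff.1 (hs ▸ hts)

theorem isCone_singleton_singleton (v : V) : IsCone {{v}} :=
  ⟨v, mem_singleton_self _, fun _ hs => by simp [mem_singleton.1 hs.1]⟩

theorem ElemStrongCollapse.isComplex (h : ElemStrongCollapse X X') (hX : IsComplex X) :
    IsComplex X' := by
  obtain ⟨v, -, -, -, rfl⟩ := h
  exact hX.filter_notMem v

theorem ElemStrongCollapse.nonempty (h : ElemStrongCollapse X X') (hX : IsComplex X) :
    X'.Nonempty := by
  obtain ⟨v, w, hv, hdom, rfl⟩ := h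
  obtain ⟨F, hF, hvF⟩ := exists_isFacet_superset hv
  have hw : {w} ∈ X := hX.singleton_mem hF.1 (hdom.2 F hF (singleton_subset_iff.1 hvF))
  exact ⟨{w}, mem_filter.2 ⟨hw, by simpa [eq_comm] using hdom.1⟩⟩

theorem StrongCollapses.isComplex (h : StrongCollapses X X') (hX : IsComplex X) :
    IsComplex X' := by
  induction h with
  | refl => exact hX
  | tail _ hstep ih => exact hstep.isComplex ih

theorem StrongCollapsible.of_strongCollapses (h : StrongCollapses X X')
    (h' : StrongCollapsible X') : StrongCollapsible X :=
  let ⟨z, hz⟩ := h'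
  ⟨z, h.trans hz⟩

theorem isCone_filter_notMem (hX : IsComplex X) {u v : V} (hv : {v} ∈ X)
    (hapex : ∀ s, IsFacet X s → v ∈ s) (huv : u ≠ v) :
    IsCone (X.filter (fun s => u ∉ s)) := by
  refine ⟨v, mem_filter.2 ⟨hv, by simpa using huv⟩, fun t ht => ?_⟩
  obtain ⟨htX, hut⟩ := mem_filter.1 ht.1
  obtain ⟨F, hF, htF⟩ := exists_isFacet_superset htX
  have hvt : insert v t ∈ X.filter (fun s => u ∉ s) :=
    mem_filter.2 ⟨hX.2 F hF.1 _ (insert_subset (hapex F hF) htF) (insert_nonempty _ _),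
      by simpa [huv] using hut⟩
  rw [← ht.2 _ hvt (subset_insert _ _)]
  exact mem_insert_self _ _

/-- Delete the vertices other than the apex one at a time; each is dominated by the apex. -/
theorem IsCone.strongCollapsible (hcone : IsCone X) (hX : IsComplex X) :
    StrongCollapsible X := by
  induction hn : X.card using Nat.strong_induction_on generalizing X with
  | _ n ih =>
  obtain ⟨v, hv, hapex⟩ := hcone
  by_cases hpt : X = {{v}}
  · exact ⟨v, hpt ▸ .refl⟩
  obtain ⟨s, hsX, hsv⟩ : ∃ s ∈ X, s ≠ {v} := by
    by_contra! h
    exact hpt (eq_singleton_iff_unique_mem.2 ⟨hv, h⟩)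
  obtain ⟨u, hus, huv⟩ : ∃ u ∈ s, u ≠ v := by
    by_contra! h
    exact hsv ((hX.1 s hsX).subset_singleton_iff.1 fun x hx => mem_singleton.2 (h x hx))
  have hu : {u} ∈ X := hX.singleton_mem hsX hus
  have hstep : ElemStrongCollapse X (X.filter (fun s => u ∉ s)) :=
    ⟨u, v, hu, ⟨huv.symm, fun F hF _ => hapex F hF⟩, rfl⟩
  have hcard : (X.filter (fun s => u ∉ s)).card < n :=
    hn ▸ card_lt_card (filter_ssubset.2 ⟨{u}, hu, by simp⟩)
  exact .of_strongCollapses (.single hstep)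
    (ih _ hcard (isCone_filter_notMem hX hv hapex huv) (hX.filter_notMem u) rfl)

end Complex

section Join

variable {A : Type u} {B : Type v} {X X' : Finset (Finset A)} {Y Y' : Finset (Finset B)}
  {J : Finset (Finset (A ⊕ B))}

theorem image_inl_union_image_inr (σ : Finset A) (η : Finset B) :
    σ.image Sum.inl ∪ η.image Sum.inr = σ.disjSum η := by
  ext (a | b) <;> simp

theorem mem_joinC {s : Finset (A ⊕ B)} :
    s ∈ joinC X Y ↔ s.Nonempty ∧ (s.toLeft = ∅ ∨ s.toLeft ∈ X) ∧
      (s.toRight = ∅ ∨ s.toRight ∈ Y) := by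
  simp only [joinC, mem_filter, mem_image, mem_product, mem_insert, Prod.exists,
    image_inl_union_image_inr, disjSum_eq_iff]
  constructor
  · rintro ⟨⟨σ, η, hση, rfl, rfl⟩, hne⟩
    exact ⟨hne, hση⟩
  · rintro ⟨hne, hση⟩
    exact ⟨⟨_, _, hση, rfl, rfl⟩, hne⟩

theorem toLeft_mem_of_mem_joinC {s : Finset (A ⊕ B)} (hs : s ∈ joinC X Y)
    (h : s.toLeft.Nonempty) : s.toLeft ∈ X :=
  (mem_joinC.1 hs).2.1.resolve_left h.ne_empty

theorem toRight_mem_of_mem_joinC {s : Finset (A ⊕ B)} (hs : s ∈ joinC X Y)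
    (h : s.toRight.Nonempty) : s.toRight ∈ Y :=
  (mem_joinC.1 hs).2.2.resolve_left h.ne_empty

theorem disjSum_mem_joinC (hX : IsComplex X) {σ : Finset A} {η : Finset B} (hσ : σ ∈ X)
    (hη : η ∈ Y) : σ.disjSum η ∈ joinC X Y := by
  obtain ⟨a, ha⟩ := hX.1 σ hσ
  exact mem_joinC.2 ⟨⟨Sum.inl a, inl_mem_disjSum.2 ha⟩, by simp [hσ], by simp [hη]⟩

theorem inl_singleton_mem_joinC {a : A} : {Sum.inl a} ∈ joinC X Y ↔ {a} ∈ X := by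
  have hL : ({Sum.inl a} : Finset (A ⊕ B)).toLeft = {a} := by ext; simp
  have hR : ({Sum.inl a} : Finset (A ⊕ B)).toRight = ∅ := by ext; simp
  simp [mem_joinC, hL, hR]

theorem inr_singleton_mem_joinC {b : B} : {Sum.inr b} ∈ joinC X Y ↔ {b} ∈ Y := by
  have hL : ({Sum.inr b} : Finset (A ⊕ B)).toLeft = ∅ := by ext; simp
  have hR : ({Sum.inr b} : Finset (A ⊕ B)).toRight = {b} := by ext; simp
  simp [mem_joinC, hL, hR]

theorem isComplex_joinC (hX : IsComplex X) (hY : IsComplex Y) : IsComplex (joinC X Y) := by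
  refine ⟨fun s hs => (mem_joinC.1 hs).1, fun s hs t hts ht => mem_joinC.2 ⟨ht, ?_, ?_⟩⟩
  · refine t.toLeft.eq_empty_or_nonempty.imp_right fun htL => ?_
    have hst := toLeft_subset_toLeft hts
    exact hX.2 _ (toLeft_mem_of_mem_joinC hs (htL.mono hst)) _ hst htL
  · refine t.toRight.eq_empty_or_nonempty.imp_right fun htR => ?_
    have hst := toRight_subset_toRight hts
    exact hY.2 _ (toRight_mem_of_mem_joinC hs (htR.mono hst)) _ hst htR

theorem joinC_ne_singleton (hX : IsComplex X) (hY : IsComplex Y) (hXne : X.Nonempty)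
    (hYne : Y.Nonempty) (z : A ⊕ B) : joinC X Y ≠ {{z}} := by
  obtain ⟨σ, hσ⟩ := hXne
  obtain ⟨η, hη⟩ := hYne
  obtain ⟨a, ha⟩ := hX.1 σ hσ
  obtain ⟨b, hb⟩ := hY.1 η hη
  intro h
  have ha' := (inl_singleton_mem_joinC (Y := Y)).2 (hX.singleton_mem hσ ha)
  have hb' := (inr_singleton_mem_joinC (X := X)).2 (hY.singleton_mem hη hb)
  rw [h, mem_singleton, singleton_inj] at ha' hb'
  exact Sum.inl_ne_inr (ha'.trans hb'.symm)

theorem exists_isFacet_disjSum_superset (hXne : X.Nonempty) (hYne : Y.Nonempty)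
    {s : Finset (A ⊕ B)} (hs : s ∈ joinC X Y) :
    ∃ σ η, IsFacet X σ ∧ IsFacet Y η ∧ s ⊆ σ.disjSum η := by
  obtain ⟨-, hL, hR⟩ := mem_joinC.1 hs
  obtain ⟨σ, hσ, hsσ⟩ := exists_isFacet_superset_of_eq_empty_or_mem hXne hL
  obtain ⟨η, hη, hsη⟩ := exists_isFacet_superset_of_eq_empty_or_mem hYne hR
  exact ⟨σ, η, hσ, hη, subset_disjSum.2 ⟨hsσ, hsη⟩⟩

theorem isFacet_joinC_iff (hX : IsComplex X) (hY : IsComplex Y) (hXne : X.Nonempty)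
    (hYne : Y.Nonempty) {s : Finset (A ⊕ B)} :
    IsFacet (joinC X Y) s ↔ IsFacet X s.toLeft ∧ IsFacet Y s.toRight := by
  constructor
  · rintro ⟨hs, hmax⟩
    obtain ⟨σ, η, hσ, hη, hsub⟩ := exists_isFacet_disjSum_superset hXne hYne hs
    obtain ⟨rfl, rfl⟩ := eq_disjSum_iff.1 (hmax _ (disjSum_mem_joinC hX hσ.1 hη.1) hsub).symm
    exact ⟨hσ, hη⟩
  · rintro ⟨hσ, hη⟩
    have hs : s ∈ joinC X Y :=
      toLeft_disjSum_toRight (u := s) ▸ disjSum_mem_joinC hX hσ.1 hη.1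
    refine ⟨hs, fun t ht hst => ?_⟩
    have hstL := toLeft_subset_toLeft hst
    have hstR := toRight_subset_toRight hst
    have hL := hσ.2 _ (toLeft_mem_of_mem_joinC ht ((hX.1 _ hσ.1).mono hstL)) hstL
    have hR := hη.2 _ (toRight_mem_of_mem_joinC ht ((hY.1 _ hη.1).mono hstR)) hstR
    rw [← toLeft_disjSum_toRight (u := t), hL, hR, toLeft_disjSum_toRight]

theorem isFacet_disjSum_joinC_iff (hX : IsComplex X) (hY : IsComplex Y) (hXne : X.Nonempty)
    (hYne : Y.Nonempty) {σ : Finset A} {η : Finset B} :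
    IsFacet (joinC X Y) (σ.disjSum η) ↔ IsFacet X σ ∧ IsFacet Y η := by
  rw [isFacet_joinC_iff hX hY hXne hYne, toLeft_disjSum, toRight_disjSum]

theorem dominated_inl_inl_joinC_iff (hX : IsComplex X) (hY : IsComplex Y) (hXne : X.Nonempty)
    (hYne : Y.Nonempty) {a b : A} :
    Dominated (joinC X Y) (Sum.inl a) (Sum.inl b) ↔ Dominated X a b := by
  refine ⟨fun ⟨hne, hdom⟩ => ⟨fun h => hne (congrArg _ h), fun σ hσ ha => ?_⟩,
    fun ⟨hne, hdom⟩ => ⟨Sum.inl_injective.ne hne, fun s hs ha => ?_⟩⟩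
  · obtain ⟨η, hη⟩ := exists_isFacet hYne
    have hf := (isFacet_disjSum_joinC_iff hX hY hXne hYne).2 ⟨hσ, hη⟩
    exact inl_mem_disjSum.1 (hdom _ hf (inl_mem_disjSum.2 ha))
  · rw [← mem_toLeft] at ha ⊢
    exact hdom _ ((isFacet_joinC_iff hX hY hXne hYne).1 hs).1 ha

theorem dominated_inr_inr_joinC_iff (hX : IsComplex X) (hY : IsComplex Y) (hXne : X.Nonempty)
    (hYne : Y.Nonempty) {a b : B} :
    Dominated (joinC X Y) (Sum.inr a) (Sum.inr b) ↔ Dominated Y a b := by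
  refine ⟨fun ⟨hne, hdom⟩ => ⟨fun h => hne (congrArg _ h), fun η hη ha => ?_⟩,
    fun ⟨hne, hdom⟩ => ⟨Sum.inr_injective.ne hne, fun s hs ha => ?_⟩⟩
  · obtain ⟨σ, hσ⟩ := exists_isFacet hXne
    have hf := (isFacet_disjSum_joinC_iff hX hY hXne hYne).2 ⟨hσ, hη⟩
    exact inr_mem_disjSum.1 (hdom _ hf (inr_mem_disjSum.2 ha))
  · rw [← mem_toRight] at ha ⊢
    exact hdom _ ((isFacet_joinC_iff hX hY hXne hYne).1 hs).2 ha

theorem isCone_of_dominated_inl_inr (hX : IsComplex X) (hY : IsComplex Y) (hXne : X.Nonempty)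
    (hYne : Y.Nonempty) {a : A} {b : B} (ha : {a} ∈ X)
    (h : Dominated (joinC X Y) (Sum.inl a) (Sum.inr b)) : IsCone Y := by
  obtain ⟨σ, hσ, haσ⟩ := exists_isFacet_superset ha
  have hapex : ∀ η, IsFacet Y η → b ∈ η := fun η hη =>
    inr_mem_disjSum.1 (h.2 _ ((isFacet_disjSum_joinC_iff hX hY hXne hYne).2 ⟨hσ, hη⟩)
      (inl_mem_disjSum.2 (singleton_subset_iff.1 haσ)))
  obtain ⟨η, hη⟩ := exists_isFacet hYne
  exact ⟨b, hY.singleton_mem hη.1 (hapex η hη), hapex⟩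

theorem isCone_of_dominated_inr_inl (hX : IsComplex X) (hY : IsComplex Y) (hXne : X.Nonempty)
    (hYne : Y.Nonempty) {b : B} {a : A} (hb : {b} ∈ Y)
    (h : Dominated (joinC X Y) (Sum.inr b) (Sum.inl a)) : IsCone X := by
  obtain ⟨η, hη, hbη⟩ := exists_isFacet_superset hb
  have hapex : ∀ σ, IsFacet X σ → a ∈ σ := fun σ hσ =>
    inl_mem_disjSum.1 (h.2 _ ((isFacet_disjSum_joinC_iff hX hY hXne hYne).2 ⟨hσ, hη⟩)
      (inr_mem_disjSum.2 (singleton_subset_iff.1 hbη)))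
  obtain ⟨σ, hσ⟩ := exists_isFacet hXne
  exact ⟨a, hX.singleton_mem hσ.1 (hapex σ hσ), hapex⟩

theorem filter_inl_notMem_joinC (a : A) :
    (joinC X Y).filter (fun s => Sum.inl a ∉ s) = joinC (X.filter (fun s => a ∉ s)) Y := by
  ext s
  rw [mem_filter, mem_joinC, mem_joinC, mem_filter, ← mem_toLeft]
  constructor
  · rintro ⟨⟨hne, hL, hR⟩, ha⟩
    exact ⟨hne, hL.imp_right fun h => ⟨h, ha⟩, hR⟩
  · rintro ⟨hne, hL, hR⟩
    refine ⟨⟨hne, hL.imp_right And.left, hR⟩, ?_⟩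
    rcases hL with hL | hL
    · simp [hL]
    · exact hL.2

theorem filter_inr_notMem_joinC (b : B) :
    (joinC X Y).filter (fun s => Sum.inr b ∉ s) = joinC X (Y.filter (fun s => b ∉ s)) := by
  ext s
  rw [mem_filter, mem_joinC, mem_joinC, mem_filter, ← mem_toRight]
  constructor
  · rintro ⟨⟨hne, hL, hR⟩, hb⟩
    exact ⟨hne, hL, hR.imp_right fun h => ⟨h, hb⟩⟩
  · rintro ⟨hne, hL, hR⟩
    refine ⟨⟨hne, hL, hR.imp_right And.left⟩, ?_⟩
    rcases hR with hR | hR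
    · simp [hR]
    · exact hR.2

theorem IsCone.joinC_left (hcone : IsCone X) (hX : IsComplex X) (hY : IsComplex Y)
    (hYne : Y.Nonempty) : IsCone (joinC X Y) := by
  obtain ⟨v, hv, hapex⟩ := hcone
  refine ⟨Sum.inl v, inl_singleton_mem_joinC.2 hv, fun s hs => ?_⟩
  rw [← mem_toLeft]
  exact hapex _ ((isFacet_joinC_iff hX hY ⟨_, hv⟩ hYne).1 hs).1

theorem IsCone.joinC_right (hcone : IsCone Y) (hX : IsComplex X) (hY : IsComplex Y)
    (hXne : X.Nonempty) : IsCone (joinC X Y) := by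
  obtain ⟨v, hv, hapex⟩ := hcone
  refine ⟨Sum.inr v, inr_singleton_mem_joinC.2 hv, fun s hs => ?_⟩
  rw [← mem_toRight]
  exact hapex _ ((isFacet_joinC_iff hX hY hXne ⟨_, hv⟩).1 hs).2

theorem ElemStrongCollapse.joinC_left (h : ElemStrongCollapse X X') (hX : IsComplex X)
    (hY : IsComplex Y) (hYne : Y.Nonempty) :
    ElemStrongCollapse (joinC X Y) (joinC X' Y) := by
  obtain ⟨a, b, ha, hdom, rfl⟩ := h
  refine ⟨Sum.inl a, Sum.inl b, inl_singleton_mem_joinC.2 ha,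
    (dominated_inl_inl_joinC_iff hX hY ⟨_, ha⟩ hYne).2 hdom, ?_⟩
  convert (filter_inl_notMem_joinC a).symm

theorem ElemStrongCollapse.joinC_right (h : ElemStrongCollapse Y Y') (hX : IsComplex X)
    (hY : IsComplex Y) (hXne : X.Nonempty) :
    ElemStrongCollapse (joinC X Y) (joinC X Y') := by
  obtain ⟨a, b, ha, hdom, rfl⟩ := h
  refine ⟨Sum.inr a, Sum.inr b, inr_singleton_mem_joinC.2 ha,
    (dominated_inr_inr_joinC_iff hX hY hXne ⟨_, ha⟩).2 hdom, ?_⟩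
  convert (filter_inr_notMem_joinC a).symm

theorem StrongCollapses.joinC_left (h : StrongCollapses X X') (hX : IsComplex X)
    (hY : IsComplex Y) (hYne : Y.Nonempty) :
    StrongCollapses (joinC X Y) (joinC X' Y) := by
  induction h with
  | refl => exact .refl
  | tail hXX' hstep ih =>
    exact ih.tail (hstep.joinC_left (StrongCollapses.isComplex hXX' hX) hY hYne)

theorem StrongCollapses.joinC_right (h : StrongCollapses Y Y') (hX : IsComplex X)
    (hY : IsComplex Y) (hXne : X.Nonempty) :
    StrongCollapses (joinC X Y) (joinC X Y') := by
  induction h with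
  | refl => exact .refl
  | tail hYY' hstep ih =>
    exact ih.tail (hstep.joinC_right hX (StrongCollapses.isComplex hYY' hY) hXne)

theorem StrongCollapsible.joinC_left (h : StrongCollapsible X) (hX : IsComplex X)
    (hY : IsComplex Y) (hYne : Y.Nonempty) : StrongCollapsible (joinC X Y) := by
  obtain ⟨v, hv⟩ := h
  have hpt := isComplex_singleton_singleton v
  have hcone := (isCone_singleton_singleton v).joinC_left hpt hY hYne
  exact .of_strongCollapses (hv.joinC_left hX hY hYne)
    (hcone.strongCollapsible (isComplex_joinC hpt hY))

theorem StrongCollapsible.joinC_right (h : StrongCollapsible Y) (hX : IsComplex X)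
    (hY : IsComplex Y) (hXne : X.Nonempty) : StrongCollapsible (joinC X Y) := by
  obtain ⟨v, hv⟩ := h
  have hpt := isComplex_singleton_singleton v
  have hcone := (isCone_singleton_singleton v).joinC_right hX hpt hXne
  exact .of_strongCollapses (hv.joinC_right hX hY hXne)
    (hcone.strongCollapsible (isComplex_joinC hX hpt))

theorem ElemStrongCollapse.joinC_cases (h : ElemStrongCollapse (joinC X Y) J)
    (hX : IsComplex X) (hY : IsComplex Y) (hXne : X.Nonempty) (hYne : Y.Nonempty) :
    (∃ X', ElemStrongCollapse X X' ∧ J = joinC X' Y) ∨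
      (∃ Y', ElemStrongCollapse Y Y' ∧ J = joinC X Y') ∨ IsCone X ∨ IsCone Y := by
  obtain ⟨a | b, a' | b', hv, hdom, rfl⟩ := h
  · have ha := inl_singleton_mem_joinC.1 hv
    have hdomX := (dominated_inl_inl_joinC_iff hX hY hXne hYne).1 hdom
    refine .inl ⟨_, ⟨a, a', ha, hdomX, rfl⟩, ?_⟩
    convert filter_inl_notMem_joinC a
  · exact .inr <| .inr <| .inr <|
      isCone_of_dominated_inl_inr hX hY hXne hYne (inl_singleton_mem_joinC.1 hv) hdom
  · exact .inr <| .inr <| .inl <|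
      isCone_of_dominated_inr_inl hX hY hXne hYne (inr_singleton_mem_joinC.1 hv) hdom
  · have hb := inr_singleton_mem_joinC.1 hv
    have hdomY := (dominated_inr_inr_joinC_iff hX hY hXne hYne).1 hdom
    refine .inr <| .inl ⟨_, ⟨b, b', hb, hdomY, rfl⟩, ?_⟩
    convert filter_inr_notMem_joinC b

theorem StrongCollapsible.of_joinC (h : StrongCollapsible (joinC X Y)) (hX : IsComplex X)
    (hY : IsComplex Y) (hXne : X.Nonempty) (hYne : Y.Nonempty) :
    StrongCollapsible X ∨ StrongCollapsible Y := by
  obtain ⟨z, hz⟩ := h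
  generalize hJ : joinC X Y = J at hz
  induction hz using Relation.ReflTransGen.head_induction_on generalizing X Y with
  | refl => exact absurd hJ (joinC_ne_singleton hX hY hXne hYne z)
  | head hstep _ ih =>
    subst hJ
    rcases hstep.joinC_cases hX hY hXne hYne with
      ⟨X', hXX', rfl⟩ | ⟨Y', hYY', rfl⟩ | hcone | hcone
    · exact (ih (hXX'.isComplex hX) hY (hXX'.nonempty hX) hYne rfl).imp_left
        (.of_strongCollapses (.single hXX'))
    · exact (ih hX (hYY'.isComplex hY) hXne (hYY'.nonempty hY) rfl).imp_right
        (.of_strongCollapses (.single hYY'))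
    · exact .inl (hcone.strongCollapsible hX)
    · exact .inr (hcone.strongCollapsible hY)

end Join

/-- Barmak–Minian. The join of two finite simplicial complexes is
strongly collapsible iff one of the factors is strongly collapsible. -/
theorem stmt4 {A : Type u} {B : Type v} (X : Finset (Finset A)) (Y : Finset (Finset B))
    (hX : IsComplex X) (hY : IsComplex Y) (hXne : X.Nonempty) (hYne : Y.Nonempty) :
    StrongCollapsible (joinC X Y) ↔ StrongCollapsible X ∨ StrongCollapsible Y :=
  ⟨fun h => h.of_joinC hX hY hXne hYne,
    fun h => h.elim (·.joinC_left hX hY hYne) (·.joinC_right hX hY hXne)⟩
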